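/- arXiv:2403.10495 — 4 statements merged into one kernel-verified Lean document; each statement's English description precedes it below -/
import Mathlib

section
/- Let g, h : R^n → R be continuously differentiable with ∇g Lipschitz with constant L and ∇h Lipschitz with constant M, and set f = g + h. Let γ > 0 with γ ≤ min(1/L, 1/M). Suppose x̄^k satisfies the optimality condition (1/γ)(x̄^k - x^{k-1}) + ∇h(x^{k-1}) + ∇g(x̄^k) = 0, and suppose ‖x^k - x̄^k‖₂ ≤ α ε_{k-1}. Then ‖∇f(x^k)‖₂ ≤ (L + 1/γ) α ε_{k-1} + (M + 1/γ) ‖x^k - x^{k-1}‖₂. -/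
/-- Bound on the gradient of `f = g + h` at the iterate `xk` in terms of the step length
and the denoiser approximation error. -/
theorem stmt_3 {n : ℕ} (g h : EuclideanSpace ℝ (Fin n) → ℝ)
    (gradg gradh : EuclideanSpace ℝ (Fin n) → EuclideanSpace ℝ (Fin n))
    (hg : ∀ x, HasGradientAt g (gradg x) x)
    (hh : ∀ x, HasGradientAt h (gradh x) x)
    (L M γ α ε : ℝ) (hL : 0 < L) (hM : 0 < M) (hγ : 0 < γ)
    (hγle : γ ≤ min (1 / L) (1 / M)) (hα : 0 < α) (hε : 0 ≤ ε)
    (hglip : ∀ x y, ‖gradg x - gradg y‖ ≤ L * ‖x - y‖)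
    (hhlip : ∀ x y, ‖gradh x - gradh y‖ ≤ M * ‖x - y‖)
    (xprev xk xbar : EuclideanSpace ℝ (Fin n))
    (hopt : (1 / γ) • (xbar - xprev) + gradh xprev + gradg xbar = 0)
    (hclose : ‖xk - xbar‖ ≤ α * ε) :
    ‖gradg xk + gradh xk‖ ≤ (L + 1 / γ) * α * ε + (M + 1 / γ) * ‖xk - xprev‖ := by
  have hγinv : 0 ≤ 1 / γ := by positivity
  have hkey : gradg xk + gradh xk
      = (gradg xk - gradg xbar) + (gradh xk - gradh xprev)
        - (1 / γ) • (xbar - xprev) := by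
    have : gradg xbar = -((1 / γ) • (xbar - xprev)) - gradh xprev := by
      have := hopt
      abel_nf at this ⊢
      linear_combination (norm := module) this
    rw [this]; abel
  have h1 : ‖gradg xk - gradg xbar‖ ≤ L * (α * ε) :=
    (hglip xk xbar).trans (by nlinarith [norm_nonneg (xk - xbar)])
  have h2 : ‖gradh xk - gradh xprev‖ ≤ M * ‖xk - xprev‖ := hhlip xk xprev
  have h3 : ‖(1 / γ) • (xbar - xprev)‖ ≤ (1 / γ) * (α * ε + ‖xk - xprev‖) := by
    rw [norm_smul, Real.norm_eq_abs, abs_of_nonneg hγinv]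
    have : ‖xbar - xprev‖ ≤ ‖xbar - xk‖ + ‖xk - xprev‖ := norm_sub_le_norm_sub_add_norm_sub _ _ _
    have h4 : ‖xbar - xk‖ ≤ α * ε := by rwa [norm_sub_rev]
    nlinarith
  calc ‖gradg xk + gradh xk‖
      ≤ ‖gradg xk - gradg xbar‖ + ‖gradh xk - gradh xprev‖ + ‖(1 / γ) • (xbar - xprev)‖ := by
        rw [hkey]
        exact (norm_sub_le _ _).trans (by gcongr; exact norm_add_le _ _)
    _ ≤ L * (α * ε) + M * ‖xk - xprev‖ + (1 / γ) * (α * ε + ‖xk - xprev‖) := by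
        gcongr
    _ = (L + 1 / γ) * α * ε + (M + 1 / γ) * ‖xk - xprev‖ := by ring
end

section
/- Let g, h : R^n → R be C¹ with ∇g L-Lipschitz and ∇h M-Lipschitz, let f = g + h, and let 0 < γ ≤ min(1/L, 1/M). Define φ(x) = (1/(2γ))‖x - (x^{k-1} - γ∇h(x^{k-1}))‖² + g(x), let x̄^k be a global minimizer of φ, and suppose ‖x^k - x̄^k‖₂ ≤ α ε_{k-1}. Set λ = 1/γ + L. Then f(x^k) ≤ f(x^{k-1}) - ((1 - γM)/(2γ)) ‖x^k - x^{k-1}‖₂² + (λ α² ε_{k-1}²)/2. -/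
/-!
With `v = xᵏ⁻¹ - γ∇h(xᵏ⁻¹)`, the objective `φ = (1/(2γ))‖· - v‖² + g` of the proximal step has a
`λ`-Lipschitz gradient, `λ = 1/γ + L`, which vanishes at the minimiser `x̄`. The descent lemma therefore
gives `φ(xᵏ) ≤ φ(x̄) + (λ/2)‖xᵏ - x̄‖² ≤ φ(xᵏ⁻¹) + (λ/2)α²ε²`. Expanding the square, `φ(xᵏ) - φ(xᵏ⁻¹)`
equals `g(xᵏ) - g(xᵏ⁻¹) + ⟪∇h(xᵏ⁻¹), xᵏ - xᵏ⁻¹⟫ + (1/(2γ))‖xᵏ - xᵏ⁻¹‖²`, and the descent lemma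
for `h` bounds the inner product below by `h(xᵏ) - h(xᵏ⁻¹) - (M/2)‖xᵏ - xᵏ⁻¹‖²`.
-/

open InnerProductSpace
open scoped RealInnerProductSpace Gradient

section
variable {E : Type*} [NormedAddCommGroup E] [InnerProductSpace ℝ E] [CompleteSpace E]

theorem IsLocalMin.hasGradientAt_eq_zero {F : E → ℝ} {a g : E} (h : IsLocalMin F a)
    (hF : HasGradientAt F g a) : g = 0 := by
  simpa using h.hasFDerivAt_eq_zero (hasGradientAt_iff_hasFDerivAt.mp hF)

theorem hasDerivAt_comp_add_smul {F : E → ℝ} {x d : E} {t : ℝ}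
    (hF : DifferentiableAt ℝ F (x + t • d)) :
    HasDerivAt (fun s : ℝ => F (x + s • d)) ⟪∇ F (x + t • d), d⟫ t := by
  have hline : HasDerivAt (fun s : ℝ => x + s • d) d t := by
    simpa using ((hasDerivAt_id t).smul_const d).const_add x
  rw [← toDual_apply_apply]
  exact (hasGradientAt_iff_hasFDerivAt.mp hF.hasGradientAt).comp_hasDerivAt t hline

theorem le_add_inner_gradient_add_of_lipschitz_gradient {F : E → ℝ} {C : ℝ}
    (hF : Differentiable ℝ F) (hlip : ∀ x y, ‖∇ F x - ∇ F y‖ ≤ C * ‖x - y‖) (x y : E) :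
    F y ≤ F x + ⟪∇ F x, y - x⟫ + C / 2 * ‖y - x‖ ^ 2 := by
  set d := y - x
  set ψ : ℝ → ℝ := fun t => F (x + t • d) - t * ⟪∇ F x, d⟫ - C / 2 * ‖d‖ ^ 2 * t ^ 2
  have hψ : ∀ t, HasDerivAt ψ (⟪∇ F (x + t • d), d⟫ - ⟪∇ F x, d⟫ - C * ‖d‖ ^ 2 * t) t := by
    intro t
    refine (((hasDerivAt_comp_add_smul (hF _)).sub ((hasDerivAt_id t).mul_const _)).sub
      ((hasDerivAt_pow 2 t).const_mul (C / 2 * ‖d‖ ^ 2))).congr_deriv ?_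
    ring
  have hψ'_nonpos : ∀ t ∈ interior (Set.Ici (0 : ℝ)),
      ⟪∇ F (x + t • d), d⟫ - ⟪∇ F x, d⟫ - C * ‖d‖ ^ 2 * t ≤ 0 := by
    intro t ht
    rw [interior_Ici, Set.mem_Ioi] at ht
    have hgrad : ‖∇ F (x + t • d) - ∇ F x‖ ≤ C * (t * ‖d‖) := by
      simpa [norm_smul, abs_of_pos ht] using hlip (x + t • d) x
    rw [sub_nonpos]
    calc ⟪∇ F (x + t • d), d⟫ - ⟪∇ F x, d⟫ = ⟪∇ F (x + t • d) - ∇ F x, d⟫ :=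
          (inner_sub_left ..).symm
      _ ≤ ‖∇ F (x + t • d) - ∇ F x‖ * ‖d‖ := real_inner_le_norm _ _
      _ ≤ C * (t * ‖d‖) * ‖d‖ := mul_le_mul_of_nonneg_right hgrad (norm_nonneg d)
      _ = C * ‖d‖ ^ 2 * t := by ring
  have hanti : AntitoneOn ψ (Set.Ici 0) :=
    antitoneOn_of_hasDerivWithinAt_nonpos (convex_Ici 0)
      (fun t _ => (hψ t).continuousAt.continuousWithinAt) (fun t _ => (hψ t).hasDerivWithinAt)
      hψ'_nonpos
  have hψ_le := hanti Set.self_mem_Ici (Set.mem_Ici.mpr zero_le_one) zero_le_one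
  simp only [ψ, one_smul, zero_smul, add_zero, d, add_sub_cancel] at hψ_le
  linarith

theorem IsLocalMin.le_add_of_lipschitz_gradient {F : E → ℝ} {C : ℝ} {a : E}
    (hmin : IsLocalMin F a) (hF : Differentiable ℝ F)
    (hlip : ∀ x y, ‖∇ F x - ∇ F y‖ ≤ C * ‖x - y‖) (y : E) :
    F y ≤ F a + C / 2 * ‖y - a‖ ^ 2 := by
  have hcrit : ∇ F a = 0 := hmin.hasGradientAt_eq_zero (hF a).hasGradientAt
  simpa [hcrit] using le_add_inner_gradient_add_of_lipschitz_gradient hF hlip a y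

theorem hasGradientAt_mul_norm_sub_sq_add (c : ℝ) (v : E) {g : E → ℝ} {x : E}
    (hg : DifferentiableAt ℝ g x) :
    HasGradientAt (fun y => c * ‖y - v‖ ^ 2 + g y) ((2 * c) • (x - v) + ∇ g x) x := by
  rw [hasGradientAt_iff_hasFDerivAt]
  refine ((((hasFDerivAt_id x).sub_const v).norm_sq.const_mul c).add
    hg.hasFDerivAt).congr_fderiv ?_
  ext y
  simp only [id_eq, map_sub, ContinuousLinearMap.comp_id, add_apply, smul_apply, sub_apply,
    coe_innerSL_apply, nsmul_eq_mul, Nat.cast_ofNat, smul_eq_mul, map_add, map_smul,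
    toDual_gradient, toDual_apply_apply]
  ring

theorem norm_gradient_mul_norm_sub_sq_add_sub_le {c L : ℝ} (hc : 0 ≤ c) (v : E) {g : E → ℝ}
    (hg : Differentiable ℝ g) (hlip : ∀ x y, ‖∇ g x - ∇ g y‖ ≤ L * ‖x - y‖) (x y : E) :
    ‖∇ (fun y => c * ‖y - v‖ ^ 2 + g y) x - ∇ (fun y => c * ‖y - v‖ ^ 2 + g y) y‖
      ≤ (2 * c + L) * ‖x - y‖ := by
  rw [(hasGradientAt_mul_norm_sub_sq_add c v (hg x)).gradient,
    (hasGradientAt_mul_norm_sub_sq_add c v (hg y)).gradient]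
  calc ‖(2 * c) • (x - v) + ∇ g x - ((2 * c) • (y - v) + ∇ g y)‖
      = ‖(2 * c) • (x - y) + (∇ g x - ∇ g y)‖ := by
        congr 1; rw [smul_sub, smul_sub, smul_sub]; abel
    _ ≤ 2 * c * ‖x - y‖ + L * ‖x - y‖ := by
      grw [norm_add_le, norm_smul, Real.norm_of_nonneg (by positivity), hlip]
    _ = (2 * c + L) * ‖x - y‖ := by ring

end

theorem stmt_5_general {n : ℕ} (g h : EuclideanSpace ℝ (Fin n) → ℝ)
    (L M γ α ε : ℝ) (hL : 0 < L) (hγ : 0 < γ)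
    (hgdiff : Differentiable ℝ g) (hhdiff : Differentiable ℝ h)
    (hglip : ∀ x y, ‖gradient g x - gradient g y‖ ≤ L * ‖x - y‖)
    (hhlip : ∀ x y, ‖gradient h x - gradient h y‖ ≤ M * ‖x - y‖)
    (f : EuclideanSpace ℝ (Fin n) → ℝ) (hf : ∀ x, f x = g x + h x)
    (xprev xk xbar : EuclideanSpace ℝ (Fin n))
    (φ : EuclideanSpace ℝ (Fin n) → ℝ)
    (hφ : ∀ x, φ x = (1 / (2 * γ)) * ‖x - (xprev - γ • gradient h xprev)‖ ^ 2 + g x)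
    (hmin : ∀ u, φ xbar ≤ φ u)
    (hclose : ‖xk - xbar‖ ≤ α * ε) :
    f xk ≤ f xprev - ((1 - γ * M) / (2 * γ)) * ‖xk - xprev‖ ^ 2
      + ((1 / γ + L) * α ^ 2 * ε ^ 2) / 2 := by
  set v := xprev - γ • ∇ h xprev
  have hφ_eq : φ = fun x => 1 / (2 * γ) * ‖x - v‖ ^ 2 + g x := funext hφ
  have hφ_diff : Differentiable ℝ φ := hφ_eq ▸ fun x =>
    (hasGradientAt_mul_norm_sub_sq_add _ v (hgdiff x)).differentiableAt
  have hφ_lip : ∀ x y, ‖∇ φ x - ∇ φ y‖ ≤ (1 / γ + L) * ‖x - y‖ := by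
    have := norm_gradient_mul_norm_sub_sq_add_sub_le (c := 1 / (2 * γ)) (by positivity) v
      hgdiff hglip
    rw [hφ_eq]
    convert this using 4
    field_simp
  have hstep : φ xk ≤ φ xprev + (1 / γ + L) / 2 * (α * ε) ^ 2 :=
    calc φ xk ≤ φ xbar + (1 / γ + L) / 2 * ‖xk - xbar‖ ^ 2 :=
          IsLocalMin.le_add_of_lipschitz_gradient (.of_forall hmin) hφ_diff hφ_lip xk
      _ ≤ φ xprev + (1 / γ + L) / 2 * (α * ε) ^ 2 := by
          gcongr
          exact hmin xprev
  have hexpand : φ xk = φ xprev + 1 / (2 * γ) * ‖xk - xprev‖ ^ 2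
      + ⟪∇ h xprev, xk - xprev⟫ + g xk - g xprev := by
    have hk : xk - v = (xk - xprev) + γ • ∇ h xprev := by simp only [v]; abel
    have hprev : xprev - v = γ • ∇ h xprev := by simp only [v]; abel
    rw [hφ, hφ, hk, hprev, norm_add_sq_real, norm_smul, real_inner_smul_right, real_inner_comm,
      Real.norm_of_nonneg hγ.le]
    field_simp
    ring
  have hdescent_h := le_add_inner_gradient_add_of_lipschitz_gradient hhdiff hhlip xprev xk
  have hcoef : (1 - γ * M) / (2 * γ) = 1 / (2 * γ) - M / 2 := by field_simp
  rw [hf, hf, hcoef]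
  linarith

/-- Sufficient-decrease inequality for PR-SANS with an inexact prior: the objective
`f = g + h` decreases up to an error term controlled by `ε_{k-1}`. -/
theorem stmt_5 {n : ℕ} (g h : EuclideanSpace ℝ (Fin n) → ℝ)
    (L M γ α ε : ℝ) (hL : 0 < L) (hM : 0 < M) (hγ : 0 < γ)
    (hγle : γ ≤ min (1 / L) (1 / M)) (hα : 0 < α) (hε : 0 ≤ ε)
    (hgdiff : Differentiable ℝ g) (hhdiff : Differentiable ℝ h)
    (hglip : ∀ x y, ‖gradient g x - gradient g y‖ ≤ L * ‖x - y‖)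
    (hhlip : ∀ x y, ‖gradient h x - gradient h y‖ ≤ M * ‖x - y‖)
    (f : EuclideanSpace ℝ (Fin n) → ℝ) (hf : ∀ x, f x = g x + h x)
    (xprev xk xbar : EuclideanSpace ℝ (Fin n))
    (φ : EuclideanSpace ℝ (Fin n) → ℝ)
    (hφ : ∀ x, φ x = (1 / (2 * γ)) * ‖x - (xprev - γ • gradient h xprev)‖ ^ 2 + g x)
    (hmin : ∀ u, φ xbar ≤ φ u)
    (hclose : ‖xk - xbar‖ ≤ α * ε) :
    f xk ≤ f xprev - ((1 - γ * M) / (2 * γ)) * ‖xk - xprev‖ ^ 2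
      + ((1 / γ + L) * α ^ 2 * ε ^ 2) / 2 :=
  stmt_5_general g h L M γ α ε hL hγ hgdiff hhdiff hglip hhlip f hf xprev xk xbar φ hφ hmin hclose
end

section
/- Suppose a sequence (x^k) in R^n and a C¹ function f : R^n → R bounded below by f* satisfy, for some constants c > 0, C ≥ 0 and nonnegative reals (ε_k): f(x^k) ≤ f(x^{k-1}) - c‖x^k - x^{k-1}‖² + C ε_{k-1}², and ‖∇f(x^k)‖² ≤ A₁‖x^k - x^{k-1}‖² + A₂ ε_{k-1}² with A₁, A₂ ≥ 0. Then for all t ≥ 1: (1/t) Σ_{k=1}^t ‖∇f(x^k)‖² ≤ (A₁/(c t)) (f(x⁰) - f*) + (A₁ C / c + A₂) · (1/t) Σ_{k=1}^t ε_{k-1}². -/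
open Finset

/-- Combining a sufficient-decrease inequality with a gradient bound yields an averaged
bound on the squared gradient norms along the iterates. -/
theorem stmt_6 {n : ℕ} (f : EuclideanSpace ℝ (Fin n) → ℝ)
    (hdiff : Differentiable ℝ f)
    (fstar : ℝ) (hbelow : ∀ x, fstar ≤ f x)
    (x : ℕ → EuclideanSpace ℝ (Fin n)) (ε : ℕ → ℝ) (hε : ∀ k, 0 ≤ ε k)
    (c C A₁ A₂ : ℝ) (hc : 0 < c) (hC : 0 ≤ C) (hA₁ : 0 ≤ A₁) (hA₂ : 0 ≤ A₂)
    (hdec : ∀ k : ℕ, 1 ≤ k → f (x k) ≤ f (x (k - 1)) - c * ‖x k - x (k - 1)‖ ^ 2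
      + C * ε (k - 1) ^ 2)
    (hgrad : ∀ k : ℕ, 1 ≤ k → ‖gradient f (x k)‖ ^ 2 ≤ A₁ * ‖x k - x (k - 1)‖ ^ 2
      + A₂ * ε (k - 1) ^ 2) :
    ∀ t : ℕ, 1 ≤ t → (1 / (t : ℝ)) * ∑ k ∈ Icc 1 t, ‖gradient f (x k)‖ ^ 2 ≤
      (A₁ / (c * t)) * (f (x 0) - fstar)
      + (A₁ * C / c + A₂) * ((1 / (t : ℝ)) * ∑ k ∈ Icc 1 t, ε (k - 1) ^ 2) := by
  have htel : ∀ t : ℕ, c * ∑ k ∈ Icc 1 t, ‖x k - x (k - 1)‖ ^ 2 ≤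
      f (x 0) - f (x t) + C * ∑ k ∈ Icc 1 t, ε (k - 1) ^ 2 := by
    intro t
    induction t with
    | zero => simp
    | succ t ih =>
      rw [Finset.sum_Icc_succ_top (by omega), Finset.sum_Icc_succ_top (by omega)]
      have hd := hdec (t + 1) (by omega)
      simp only [Nat.add_sub_cancel] at hd ⊢
      nlinarith [hd]
  intro t ht
  have ht0 : (0:ℝ) < t := by exact_mod_cast Nat.lt_of_lt_of_le Nat.zero_lt_one ht
  set S := ∑ k ∈ Icc 1 t, ‖gradient f (x k)‖ ^ 2 with hS
  set E := ∑ k ∈ Icc 1 t, ε (k - 1) ^ 2 with hE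
  set D := ∑ k ∈ Icc 1 t, ‖x k - x (k - 1)‖ ^ 2 with hD
  have h1 : S ≤ A₁ * D + A₂ * E := by
    rw [hS, hD, hE, Finset.mul_sum, Finset.mul_sum, ← Finset.sum_add_distrib]
    exact Finset.sum_le_sum fun k hk => hgrad k (Finset.mem_Icc.mp hk).1
  have h2 : c * D ≤ f (x 0) - f (x t) + C * E := htel t
  have h3 : fstar ≤ f (x t) := hbelow _
  have P : c * S ≤ A₁ * (f (x 0) - fstar) + (A₁ * C + A₂ * c) * E := by
    nlinarith [mul_le_mul_of_nonneg_left h2 hA₁, mul_le_mul_of_nonneg_left h3 hA₁,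
      mul_le_mul_of_nonneg_left h1 hc.le]
  have hpos : (0:ℝ) ≤ 1 / (c * t) := by positivity
  have := mul_le_mul_of_nonneg_left P hpos
  calc (1 / (t:ℝ)) * S = (1 / (c * t)) * (c * S) := by field_simp
    _ ≤ (1 / (c * t)) * (A₁ * (f (x 0) - fstar) + (A₁ * C + A₂ * c) * E) := this
    _ = (A₁ / (c * t)) * (f (x 0) - fstar) + (A₁ * C / c + A₂) * ((1 / (t:ℝ)) * E) := by
        field_simp
end

section
/- Let g, h : R^n → R be C¹ with ∇g L-Lipschitz and ∇h M-Lipschitz, f = g + h, 0 < γ ≤ min(1/L, 1/M) with γM < 1, f bounded below by f(x*). Suppose iterates satisfy, for all k ≥ 1, both (i) f(x^k) ≤ f(x^{k-1}) - ((1-γM)/(2γ))‖x^k - x^{k-1}‖² + (λα²/2) ε_{k-1}² with λ = 1/γ + L, and (ii) ‖∇f(x^k)‖² ≤ 2(M + 1/γ)² ‖x^k - x^{k-1}‖² + 2α²(L + 1/γ)² ε_{k-1}². Then for every t ≥ 1, min_{1≤k≤t} ‖∇f(x^k)‖² ≤ (B₁/t)(f(x⁰) - f(x*)) + B₂ ε̄_t²,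 where B₁ = 4(1+γM)²/(γ(1-γM)), B₂ = λα²B₁/2 + 2α²(1+γL)²/γ², and ε̄_t² = (1/t)Σ_{k=1}^t ε_{k-1}². -/
/-!
Summing the sufficient-decrease inequality (i) over `k = 1, …, t` telescopes the function
values, so `f(x⁰) - f(x*)` plus the accumulated prior errors controls `∑ ‖x^k - x^{k-1}‖²`.
Summing the gradient bound (ii) bounds `∑ ‖∇f(x^k)‖²` by the same sum of steps plus the errors,
and the minimum over `k ≤ t` is at most the average. The constant `B₁` is chosen so that
`2(M + 1/γ)² = B₁ (1 - γM)/(2γ)`.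
-/

open Finset

lemma sum_Icc_le_of_le_sub_add {u a b : ℕ → ℝ}
    (h : ∀ k, 1 ≤ k → u k ≤ u (k - 1) - a k + b k) (t : ℕ) :
    ∑ k ∈ Icc 1 t, a k ≤ u 0 - u t + ∑ k ∈ Icc 1 t, b k := by
  induction t with
  | zero => simp
  | succ t ih =>
    rw [sum_Icc_succ_top (by omega), sum_Icc_succ_top (by omega)]
    have hstep := h (t + 1) (by omega)
    rw [Nat.add_sub_cancel] at hstep
    linarith

lemma card_mul_inf'_le_sum {ι : Type*} (s : Finset ι) (hs : s.Nonempty) (F : ι → ℝ) :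
    #s * s.inf' hs F ≤ ∑ i ∈ s, F i := by
  simpa [nsmul_eq_mul] using card_nsmul_le_sum s F _ fun i hi => inf'_le F hi

lemma two_mul_add_inv_sq_eq {γ M : ℝ} (hγ : 0 < γ) (hγM : γ * M < 1) :
    2 * (M + 1 / γ) ^ 2 =
      4 * (1 + γ * M) ^ 2 / (γ * (1 - γ * M)) * ((1 - γ * M) / (2 * γ)) := by
  have : 0 < 1 - γ * M := by linarith
  rw [div_mul_div_comm, eq_div_iff (by positivity)]
  field_simp
  ring

theorem stmt_19_general {n : ℕ}
    (L M γ α : ℝ) (hγ : 0 < γ)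
    (hγM : γ * M < 1)
    (f : EuclideanSpace ℝ (Fin n) → ℝ)
    (xstar : EuclideanSpace ℝ (Fin n)) (hbelow : ∀ x, f xstar ≤ f x)
    (x : ℕ → EuclideanSpace ℝ (Fin n)) (ε : ℕ → ℝ)
    (hdec : ∀ k : ℕ, 1 ≤ k →
      f (x k) ≤ f (x (k - 1)) - ((1 - γ * M) / (2 * γ)) * ‖x k - x (k - 1)‖ ^ 2
        + ((1 / γ + L) * α ^ 2 / 2) * ε (k - 1) ^ 2)
    (hgrad : ∀ k : ℕ, 1 ≤ k →
      ‖gradient f (x k)‖ ^ 2 ≤ 2 * (M + 1 / γ) ^ 2 * ‖x k - x (k - 1)‖ ^ 2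
        + 2 * α ^ 2 * (L + 1 / γ) ^ 2 * ε (k - 1) ^ 2) :
    ∀ t : ℕ, ∀ ht : 1 ≤ t,
      (Icc 1 t).inf' (Finset.nonempty_Icc.mpr ht) (fun k => ‖gradient f (x k)‖ ^ 2) ≤
        (4 * (1 + γ * M) ^ 2 / (γ * (1 - γ * M)) / t) * (f (x 0) - f xstar)
        + ((1 / γ + L) * α ^ 2 * (4 * (1 + γ * M) ^ 2 / (γ * (1 - γ * M))) / 2
            + 2 * α ^ 2 * (1 + γ * L) ^ 2 / γ ^ 2)
          * ((1 / (t : ℝ)) * ∑ k ∈ Icc 1 t, ε (k - 1) ^ 2) := by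
  intro t ht
  have hmin := card_mul_inf'_le_sum (Icc 1 t) (nonempty_Icc.mpr ht)
    (fun k => ‖gradient f (x k)‖ ^ 2)
  rw [Nat.card_Icc, Nat.add_sub_cancel] at hmin
  set S := ∑ k ∈ Icc 1 t, ‖x k - x (k - 1)‖ ^ 2
  set E := ∑ k ∈ Icc 1 t, ε (k - 1) ^ 2
  set G := ∑ k ∈ Icc 1 t, ‖gradient f (x k)‖ ^ 2
  have hsteps : (1 - γ * M) / (2 * γ) * S ≤ f (x 0) - f xstar + (1 / γ + L) * α ^ 2 / 2 * E := by
    have := sum_Icc_le_of_le_sub_add (u := fun k => f (x k)) hdec t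
    rw [← mul_sum, ← mul_sum] at this
    linarith [hbelow (x t)]
  have hgrads : G ≤ 2 * (M + 1 / γ) ^ 2 * S + 2 * α ^ 2 * (L + 1 / γ) ^ 2 * E := by
    rw [mul_sum, mul_sum, ← sum_add_distrib]
    exact sum_le_sum fun k hk => hgrad k (mem_Icc.mp hk).1
  have hLγ : (L + 1 / γ) ^ 2 = (1 + γ * L) ^ 2 / γ ^ 2 := by
    field_simp
    ring
  rw [two_mul_add_inv_sq_eq hγ hγM, hLγ] at hgrads
  set B₁ := 4 * (1 + γ * M) ^ 2 / (γ * (1 - γ * M))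
  have hB₁ : 0 ≤ B₁ := div_nonneg (by positivity) (mul_nonneg hγ.le (by linarith))
  have hsteps' := mul_le_mul_of_nonneg_left hsteps hB₁
  have ht' : (0 : ℝ) < t := by exact_mod_cast ht
  calc _ ≤ (B₁ * (f (x 0) - f xstar)
          + ((1 / γ + L) * α ^ 2 * B₁ / 2 + 2 * α ^ 2 * (1 + γ * L) ^ 2 / γ ^ 2) * E) / t := by
        rw [le_div_iff₀ ht']
        linear_combination hmin + hgrads + hsteps'
    _ = _ := by ring

/-- Main convergence theorem for PR-SANS with inexact (domain-adapted) priors: the running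
minimum of squared gradient norms is bounded by `(B₁/t)(f(x⁰) - f(x*)) + B₂ ε̄_t²`. -/
theorem stmt_19 {n : ℕ} (g h : EuclideanSpace ℝ (Fin n) → ℝ)
    (hgdiff : Differentiable ℝ g) (hhdiff : Differentiable ℝ h)
    (L M γ α : ℝ) (hL : 0 < L) (hM : 0 < M) (hγ : 0 < γ)
    (hγle : γ ≤ min (1 / L) (1 / M)) (hγM : γ * M < 1) (hα : 0 < α)
    (hglip : ∀ a b, ‖gradient g a - gradient g b‖ ≤ L * ‖a - b‖)
    (hhlip : ∀ a b, ‖gradient h a - gradient h b‖ ≤ M * ‖a - b‖)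
    (f : EuclideanSpace ℝ (Fin n) → ℝ) (hf : ∀ x, f x = g x + h x)
    (xstar : EuclideanSpace ℝ (Fin n)) (hbelow : ∀ x, f xstar ≤ f x)
    (x : ℕ → EuclideanSpace ℝ (Fin n)) (ε : ℕ → ℝ) (hε : ∀ k, 0 ≤ ε k)
    (hdec : ∀ k : ℕ, 1 ≤ k →
      f (x k) ≤ f (x (k - 1)) - ((1 - γ * M) / (2 * γ)) * ‖x k - x (k - 1)‖ ^ 2
        + ((1 / γ + L) * α ^ 2 / 2) * ε (k - 1) ^ 2)
    (hgrad : ∀ k : ℕ, 1 ≤ k →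
      ‖gradient f (x k)‖ ^ 2 ≤ 2 * (M + 1 / γ) ^ 2 * ‖x k - x (k - 1)‖ ^ 2
        + 2 * α ^ 2 * (L + 1 / γ) ^ 2 * ε (k - 1) ^ 2) :
    ∀ t : ℕ, ∀ ht : 1 ≤ t,
      (Icc 1 t).inf' (Finset.nonempty_Icc.mpr ht) (fun k => ‖gradient f (x k)‖ ^ 2) ≤
        (4 * (1 + γ * M) ^ 2 / (γ * (1 - γ * M)) / t) * (f (x 0) - f xstar)
        + ((1 / γ + L) * α ^ 2 * (4 * (1 + γ * M) ^ 2 / (γ * (1 - γ * M))) / 2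
            + 2 * α ^ 2 * (1 + γ * L) ^ 2 / γ ^ 2)
          * ((1 / (t : ℝ)) * ∑ k ∈ Icc 1 t, ε (k - 1) ^ 2) :=
  stmt_19_general L M γ α hγ hγM f xstar hbelow x ε hdec hgrad
end
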